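/- Let Γ be a group, a ∈ Γ, let A = ⟨a⟩ and B be subgroups of Γ with an isomorphism φ : A ≅ B, and let π be the HNN extension of Γ relative to φ, with canonical homomorphism of : Γ → π and stable letter τ ∈ π satisfying τ·of(x)·τ⁻¹ = of(φ(x)) for all x ∈ A. Let ρ : π → GL(d,ℝ) be a homomorphism, let f : GL(d,ℝ) → ℝ be an invariant function with variation function F, let n ≥ 1 and t ∈ ℝ, and put x_t := exp(t·n·F(ρ(of(a))ⁿ)). Then x_t commutes with ρ(of(x)) for every x ∈ A, and consequently there exists a (unique) group homomorphism Ξ_t : π → GL(d,ℝ) satisfying Ξ_t(of(γ)) = ρ(of(γ)) for all γ ∈ Γ and Ξ_t(τ) = ρ(τ)·x_t. (This is the representation-level content of the paper's description of the Hamiltonian flow of f_{αⁿ} for a non-separating simple closed curve α: the flow is covered by the generalized twist Ξ_t.) -/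

import Mathlib

open Matrix

attribute [local instance] Matrix.normedAddCommGroup Matrix.normedSpace

noncomputable section

/-- An invariant function on `GL(d,ℝ)`: a real-valued function on `d × d` real matrices
that is differentiable on the open set of invertible matrices and invariant under
conjugation. -/
def IsInvariantFunOne (d : ℕ) (f : Matrix (Fin d) (Fin d) ℝ → ℝ) : Prop :=
  DifferentiableOn ℝ f {g : Matrix (Fin d) (Fin d) ℝ | IsUnit g} ∧
  ∀ h : Matrix (Fin d) (Fin d) ℝ, IsUnit h →
    ∀ g : Matrix (Fin d) (Fin d) ℝ, IsUnit g → f (h * g * h⁻¹) = f g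

/-- `F` is the variation function of `f : GL(d,ℝ) → ℝ` with respect to the trace form:
`tr (F g * X)` is the derivative at `t = 0` of `t ↦ f (exp(tX)·g)`, for every `X`. -/
def IsVariationFunOne (d : ℕ) (f : Matrix (Fin d) (Fin d) ℝ → ℝ)
    (F : Matrix (Fin d) (Fin d) ℝ → Matrix (Fin d) (Fin d) ℝ) : Prop :=
  ∀ g : Matrix (Fin d) (Fin d) ℝ, IsUnit g → ∀ X : Matrix (Fin d) (Fin d) ℝ,
    HasDerivAt (fun t : ℝ => f (NormedSpace.exp (t • X) * g))
      (Matrix.trace (F g * X)) 0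

/-- The twist matrix `x_t = exp (t·n·F(aⁿ))`. -/
def twistMatrix (d : ℕ) (F : Matrix (Fin d) (Fin d) ℝ → Matrix (Fin d) (Fin d) ℝ)
    (n : ℕ) (t : ℝ) (a : Matrix (Fin d) (Fin d) ℝ) : Matrix (Fin d) (Fin d) ℝ :=
  NormedSpace.exp ((t * n) • F (a ^ n))

/-! Conjugation invariance of `f` makes its variation function equivariant,
`F (h g h⁻¹) = h F(g) h⁻¹`, because the trace form is nondegenerate. Since `g := ρ(of a)` commutes
with `gⁿ`, it commutes with `F(gⁿ)` and hence with `x_t`, so `x_t` centralises `ρ(of ⟨a⟩)`.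
Therefore `ρ(τ) x_t` conjugates `ρ(of x)`, `x ∈ ⟨a⟩`, exactly as `ρ(τ)` does, and the universal
property of the HNN extension yields `Ξ_t`. -/

theorem Matrix.ext_of_forall_trace_mul_eq {m n R : Type*} [Fintype m] [Fintype n] [DecidableEq m]
    [DecidableEq n] [Semiring R] {M N : Matrix m n R}
    (h : ∀ X : Matrix n m R, (M * X).trace = (N * X).trace) : M = N := by
  ext i j
  simpa [trace_mul_single] using h (single j i 1)

variable {d : ℕ} {f : Matrix (Fin d) (Fin d) ℝ → ℝ}
  {F : Matrix (Fin d) (Fin d) ℝ → Matrix (Fin d) (Fin d) ℝ}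

theorem IsVariationFunOne.apply_conj (hf : IsInvariantFunOne d f) (hF : IsVariationFunOne d f F)
    {h g : Matrix (Fin d) (Fin d) ℝ} (hh : IsUnit h) (hg : IsUnit g) :
    F (h * g * h⁻¹) = h * F g * h⁻¹ := by
  have hdet : IsUnit h.det := (Matrix.isUnit_iff_isUnit_det h).mp hh
  have hhgh : IsUnit (h * g * h⁻¹) := (hh.mul hg).mul (Matrix.isUnit_nonsing_inv_iff.mpr hh)
  refine Matrix.ext_of_forall_trace_mul_eq fun X => ?_
  have hfun : (fun s : ℝ => f (NormedSpace.exp (s • X) * (h * g * h⁻¹)))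
      = fun s : ℝ => f (NormedSpace.exp (s • (h⁻¹ * X * h)) * g) := by
    funext s
    rw [← hf.2 h hh _ ((Matrix.isUnit_exp _).mul hg), ← smul_mul_assoc, ← mul_smul_comm,
      Matrix.exp_conj' h _ hh]
    simp only [mul_assoc, Matrix.mul_nonsing_inv_cancel_left h _ hdet]
  calc (F (h * g * h⁻¹) * X).trace
      = (F g * (h⁻¹ * X * h)).trace := (hF _ hhgh X).unique (hfun ▸ hF g hg _)
    _ = (h * F g * h⁻¹ * X).trace := by
      rw [Matrix.trace_mul_comm, Matrix.trace_mul_cycle, Matrix.trace_mul_cycle]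
      simp only [mul_assoc]

theorem IsVariationFunOne.commute (hf : IsInvariantFunOne d f) (hF : IsVariationFunOne d f F)
    {h g : Matrix (Fin d) (Fin d) ℝ} (hh : IsUnit h) (hg : IsUnit g) (hc : Commute h g) :
    Commute h (F g) := by
  have hdet : IsUnit h.det := (Matrix.isUnit_iff_isUnit_det h).mp hh
  have hfix : h * g * h⁻¹ = g := by rw [hc.eq, Matrix.mul_nonsing_inv_cancel_right _ _ hdet]
  have hconj := hF.apply_conj hf hh hg
  rw [hfix] at hconj
  calc h * F g = h * F g * h⁻¹ * h := by rw [Matrix.nonsing_inv_mul_cancel_right _ _ hdet]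
    _ = F g * h := by rw [← hconj]

theorem commute_twistMatrix (hf : IsInvariantFunOne d f) (hF : IsVariationFunOne d f F)
    {g : Matrix (Fin d) (Fin d) ℝ} (hg : IsUnit g) (n : ℕ) (t : ℝ) :
    Commute (twistMatrix d F n t g) g :=
  ((hF.commute hf hg (hg.pow n) ((Commute.refl g).pow_right n)).symm.smul_left _).exp_left

theorem MonoidHom.existsUnique_twist {Γ π H : Type*} [Group Γ] [Group π] [Group H]
    {A B : Subgroup Γ} (φ : A ≃* B) (of : Γ →* π) (τ : π)
    (hrel : ∀ x : A, τ * of x * τ⁻¹ = of (φ x))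
    (huniv : ∀ (f : Γ →* H) (u : H), (∀ x : A, u * f x * u⁻¹ = f (φ x)) →
      ∃! Φ : π →* H, Φ.comp of = f ∧ Φ τ = u)
    (ρ : π →* H) {u : H} (hu : ∀ x : A, Commute u (ρ (of x))) :
    ∃! Ξ : π →* H, Ξ.comp of = ρ.comp of ∧ Ξ τ = ρ τ * u := by
  refine huniv _ _ fun x => ?_
  calc ρ τ * u * (ρ.comp of) x * (ρ τ * u)⁻¹
      = ρ (τ * of x * τ⁻¹) := by simp only [MonoidHom.comp_apply, map_mul, map_inv,
        _root_.mul_inv_rev, mul_assoc, (hu x).eq, mul_inv_cancel_left]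
    _ = (ρ.comp of) (φ x) := by rw [hrel]; rfl

theorem generalized_twist_HNN_extension_general
    {Γ π : Type} [Group Γ] [Group π] (a : Γ) (B : Subgroup Γ)
    (φ : (Subgroup.zpowers a) ≃* B)
    (of : Γ →* π) (τ : π)
    (hrel : ∀ x : Subgroup.zpowers a, τ * of (x : Γ) * τ⁻¹ = of ((φ x : B) : Γ))
    (huniv : ∀ (H : Type) [Group H], ∀ (f : Γ →* H) (u : H),
      (∀ x : Subgroup.zpowers a, u * f (x : Γ) * u⁻¹ = f ((φ x : B) : Γ)) →
        ∃! Φ : π →* H, Φ.comp of = f ∧ Φ τ = u)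
    (d : ℕ) (ρ : π →* Matrix.GeneralLinearGroup (Fin d) ℝ)
    (f : Matrix (Fin d) (Fin d) ℝ → ℝ)
    (F : Matrix (Fin d) (Fin d) ℝ → Matrix (Fin d) (Fin d) ℝ)
    (hf : IsInvariantFunOne d f) (hF : IsVariationFunOne d f F)
    (n : ℕ) (t : ℝ) :
    (∀ x : Γ, x ∈ Subgroup.zpowers a →
      twistMatrix d F n t (ρ (of a)) * (ρ (of x) : Matrix (Fin d) (Fin d) ℝ)
        = (ρ (of x) : Matrix (Fin d) (Fin d) ℝ) * twistMatrix d F n t (ρ (of a))) ∧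
    ∃! Ξ : π →* Matrix.GeneralLinearGroup (Fin d) ℝ,
      (∀ γ : Γ, (Ξ (of γ) : Matrix (Fin d) (Fin d) ℝ)
          = (ρ (of γ) : Matrix (Fin d) (Fin d) ℝ)) ∧
      (Ξ τ : Matrix (Fin d) (Fin d) ℝ)
          = (ρ τ : Matrix (Fin d) (Fin d) ℝ) * twistMatrix d F n t (ρ (of a)) := by
  have hcomm : ∀ x ∈ Subgroup.zpowers a,
      Commute (twistMatrix d F n t (ρ (of a))) (ρ (of x) : Matrix (Fin d) (Fin d) ℝ) := by
    rintro _ ⟨k, rfl⟩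
    simpa only [map_zpow] using
      (commute_twistMatrix hf hF (ρ (of a)).isUnit n t).units_zpow_right k
  obtain ⟨x, hx⟩ : IsUnit (twistMatrix d F n t (ρ (of a))) := Matrix.isUnit_exp _
  refine ⟨fun γ hγ => (hcomm γ hγ).eq, ?_⟩
  have hxcomm : ∀ γ : Subgroup.zpowers a, Commute x (ρ (of γ)) := fun γ =>
    Commute.units_val_iff.mp (hx ▸ hcomm γ γ.2)
  refine (existsUnique_congr fun Ξ => ?_).mp
    (MonoidHom.existsUnique_twist φ of τ hrel (huniv _) ρ hxcomm)
  simp only [MonoidHom.ext_iff, MonoidHom.comp_apply, Units.ext_iff, Units.val_mul, hx]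

/-- let `π` be the HNN extension of `Γ` relative to an isomorphism
`φ : ⟨a⟩ ≅ B` (expressed by the defining relation for the stable letter `τ` and the
universal property), `ρ : π → GL(d,ℝ)` a homomorphism, `f` an invariant function with
variation function `F`, and `x_t = exp (t·n·F(ρ(of a)ⁿ))`. Then `x_t` commutes with
`ρ(of x)` for every `x ∈ ⟨a⟩`, and there is a unique homomorphism `Ξ_t : π → GL(d,ℝ)`
equal to `ρ` on `Γ` and sending `τ` to `ρ(τ)·x_t`. -/
theorem generalized_twist_HNN_extension
    {Γ π : Type} [Group Γ] [Group π] (a : Γ) (B : Subgroup Γ)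
    (φ : (Subgroup.zpowers a) ≃* B)
    (of : Γ →* π) (τ : π)
    (hrel : ∀ x : Subgroup.zpowers a, τ * of (x : Γ) * τ⁻¹ = of ((φ x : B) : Γ))
    (huniv : ∀ (H : Type) [Group H], ∀ (f : Γ →* H) (u : H),
      (∀ x : Subgroup.zpowers a, u * f (x : Γ) * u⁻¹ = f ((φ x : B) : Γ)) →
        ∃! Φ : π →* H, Φ.comp of = f ∧ Φ τ = u)
    (d : ℕ) (ρ : π →* Matrix.GeneralLinearGroup (Fin d) ℝ)
    (f : Matrix (Fin d) (Fin d) ℝ → ℝ)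
    (F : Matrix (Fin d) (Fin d) ℝ → Matrix (Fin d) (Fin d) ℝ)
    (hf : IsInvariantFunOne d f) (hF : IsVariationFunOne d f F)
    (n : ℕ) (hn : 0 < n) (t : ℝ) :
    (∀ x : Γ, x ∈ Subgroup.zpowers a →
      twistMatrix d F n t (ρ (of a)) * (ρ (of x) : Matrix (Fin d) (Fin d) ℝ)
        = (ρ (of x) : Matrix (Fin d) (Fin d) ℝ) * twistMatrix d F n t (ρ (of a))) ∧
    ∃! Ξ : π →* Matrix.GeneralLinearGroup (Fin d) ℝ,
      (∀ γ : Γ, (Ξ (of γ) : Matrix (Fin d) (Fin d) ℝ)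
          = (ρ (of γ) : Matrix (Fin d) (Fin d) ℝ)) ∧
      (Ξ τ : Matrix (Fin d) (Fin d) ℝ)
          = (ρ τ : Matrix (Fin d) (Fin d) ℝ) * twistMatrix d F n t (ρ (of a)) :=
  generalized_twist_HNN_extension_general a B φ of τ hrel huniv d ρ f F hf hF n t
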